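/- arXiv:2203.09233 — 4 statements merged into one kernel-verified Lean document; each statement's English description precedes it below -/
import Mathlib

section
/- Let τ be any subset of {nop, inp, out, swap, used, free} and let A be a deterministic transition system containing a path s₀ →a s₁ →b s₂ →a s₃ →b s₄. Then no τ-region of A solves the state separation atom (s₀, s₄); that is, for every τ-region R=(sup,sig), sup(s₀)=sup(s₄). -/
/-- The Boolean interaction `nop` (identity, total). -/
def nopB : Bool → Option Bool := fun x => some x
/-- The Boolean interaction `inp` (defined only on `true`, maps it to `false`). -/
def inpB : Bool → Option Bool := fun x => if x then some false else none
/-- The Boolean interaction `out` (defined only on `false`, maps it to `true`). -/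
def outB : Bool → Option Bool := fun x => if x then none else some true
/-- The Boolean interaction `swap` (negation, total). -/
def swapB : Bool → Option Bool := fun x => some (!x)
/-- The Boolean interaction `set` (constantly `true`, total). -/
def setB : Bool → Option Bool := fun _ => some true
/-- The Boolean interaction `res` (constantly `false`, total). -/
def resB : Bool → Option Bool := fun _ => some false
/-- The Boolean interaction `used` (defined only on `true`, maps it to `true`). -/
def usedB : Bool → Option Bool := fun x => if x then some true else none
/-- The Boolean interaction `free` (defined only on `false`, maps it to `false`). -/
def freeB : Bool → Option Bool := fun x => if x then none else some false

/-- A `τ`-region of a (deterministic, partial) transition system `δ`: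
for every edge `s —e→ s'`, `sig e` is defined at `sup s` with value `sup s'`. -/
def IsRegion {S E : Type*} (δ : S → E → Option S)
    (sup : S → Bool) (sig : E → Bool → Option Bool) : Prop :=
  ∀ s e s', δ s e = some s' → sig e (sup s) = some (sup s')

theorem stmt4 {S E : Type*} (τ : Set (Bool → Option Bool))
    (hτ : τ ⊆ {nopB, inpB, outB, swapB, usedB, freeB})
    (δ : S → E → Option S) (a b : E) (s₀ s₁ s₂ s₃ s₄ : S)
    (h1 : δ s₀ a = some s₁) (h2 : δ s₁ b = some s₂)
    (h3 : δ s₂ a = some s₃) (h4 : δ s₃ b = some s₄)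
    (sup : S → Bool) (sig : E → Bool → Option Bool)
    (hsig : ∀ e, sig e ∈ τ) (hreg : IsRegion δ sup sig) :
    sup s₀ = sup s₄ := by
  have key : ∀ e : E, (∀ x y : Bool, sig e x = some y → y = x) ∨
      (∀ x y : Bool, sig e x = some y → y = !x) := by
    intro e
    have h := hτ (hsig e)
    simp only [Set.mem_insert_iff, Set.mem_singleton_iff] at h
    rcases h with h|h|h|h|h|h <;>
      [left; right; right; right; left; left] <;>
      intro x y hxy <;> rw [h] at hxy <;> cases x <;>
      simp [nopB, inpB, outB, swapB, usedB, freeB] at hxy <;> simp [hxy]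
  have e1 := hreg _ _ _ h1
  have e2 := hreg _ _ _ h2
  have e3 := hreg _ _ _ h3
  have e4 := hreg _ _ _ h4
  rcases key a with ha|ha <;> rcases key b with hb|hb <;>
    have q1 := ha _ _ e1 <;> have q2 := hb _ _ e2 <;>
    have q3 := ha _ _ e3 <;> have q4 := hb _ _ e4 <;>
    rw [q4, q3, q2, q1] <;> simp
end

section
/- Let τ be any subset of {nop, inp, out, swap, used, free} and A a deterministic transition system containing a path s₀ →a s₁ →b s₂ →a s₃ →b s₄, where the event a does not occur at s₄ (δ(s₄,a) is undefined). Then the event/state separation atom (a, s₄) is not solvable by any τ-region: for every τ-region (sup,sig), sig(a) is defined at sup(s₄). -/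
theorem stmt5 {S E : Type*} (τ : Set (Bool → Option Bool))
    (hτ : τ ⊆ {nopB, inpB, outB, swapB, usedB, freeB})
    (δ : S → E → Option S) (a b : E) (s₀ s₁ s₂ s₃ s₄ : S)
    (h1 : δ s₀ a = some s₁) (h2 : δ s₁ b = some s₂)
    (h3 : δ s₂ a = some s₃) (h4 : δ s₃ b = some s₄)
    (h5 : δ s₄ a = none)
    (sup : S → Bool) (sig : E → Bool → Option Bool)
    (hsig : ∀ e, sig e ∈ τ) (hreg : IsRegion δ sup sig) :
    (sig a (sup s₄)).isSome := by
  have r1 := hreg _ _ _ h1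
  have r2 := hreg _ _ _ h2
  have r3 := hreg _ _ _ h3
  have r4 := hreg _ _ _ h4
  by_cases h : sup s₀ = sup s₂
  · -- then sup s₁ = sup s₃, so sup s₄ = sup s₂, where sig a is defined
    rw [h] at r1
    rw [r3] at r1
    have h13 : sup s₃ = sup s₁ := (Option.some.inj r1)
    rw [h13, r2] at r4
    have h42 : sup s₂ = sup s₄ := Option.some.inj r4
    rw [← h42, r3]
    rfl
  · -- sup s₄ equals sup s₀ or sup s₂
    rcases Bool.eq_false_or_eq_true (sup s₄) with h4' | h4' <;>
    rcases Bool.eq_false_or_eq_true (sup s₀) with h0' | h0' <;>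
    rcases Bool.eq_false_or_eq_true (sup s₂) with h2' | h2' <;>
      simp_all [r1, r3]
end

section
/- Let A be a deterministic transition system and B an E'-label-splitting of A in which some event e of A is genuinely split (there exist distinct copies e¹, e² of e in E'). Then B has an unsolvable event/state separation atom for any Boolean type τ whose elements all have both 0 and 1 in their domain; in particular B does not have the τ-ESSP for τ = {nop, swap}. -/
theorem stmt7 {S E E' : Type*}
    (δA : S → E → Option S) (δB : S → E' → Option S) (π : E' → E)
    (hproj : ∀ s e' s', δB s e' = some s' → δA s (π e') = some s')
    (hcopy : ∀ s e s', δA s e = some s' →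
      ∃! e', π e' = e ∧ δB s e' = some s')
    (e₁ e₂ : E') (hne : e₁ ≠ e₂) (hπ : π e₁ = π e₂)
    (s t s' t' : S) (h₁ : δB s e₁ = some s') (h₂ : δB t e₂ = some t') :
    ∃ (e₀ : E') (s₀ : S), δB s₀ e₀ = none ∧
      ∀ (sup : S → Bool) (sig : E' → Bool → Option Bool),
        (∀ e, sig e ∈ ({nopB, swapB} : Set (Bool → Option Bool))) →
        IsRegion δB sup sig → (sig e₀ (sup s₀)).isSome := by
  refine ⟨e₂, s, ?_, ?_⟩
  · cases hs2 : δB s e₂ with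
    | none => rfl
    | some u =>
      exfalso
      have hA1 := hproj s e₁ s' h₁
      have hA2 := hproj s e₂ u hs2
      rw [hπ] at hA1
      rw [hA1] at hA2
      obtain ⟨e', _, huniq⟩ := hcopy s (π e₂) s' hA1
      have h1 : e₁ = e' := huniq e₁ ⟨hπ, h₁⟩
      have h2 : e₂ = e' := huniq e₂ ⟨rfl, by rw [hs2, hA2]⟩
      exact hne (h1.trans h2.symm)
  · intro sup sig hsig _
    rcases hsig e₂ with h | h
    · simp [h, nopB]
    · simp only [Set.mem_singleton_iff] at h
      simp [h, swapB]
end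

section
/- Let B be an edge-removal of a finite deterministic transition system A = (S,E,δ,ι) with removed edge set K, and suppose every ESSP atom of B is solvable by a τ-region where τ ⊆ {nop, swap, used, free}. Then the removed edge set is symmetric in the following sense for bidirectional A: if s →e s' ∈ K and s' →e s is an edge of A, then s' →e s ∈ K as well. -/
theorem stmt16 {S E : Type*} (τ : Set (Bool → Option Bool))
    (hτ : τ ⊆ {nopB, swapB, usedB, freeB})
    (δA δB : S → E → Option S)
    (hsub : ∀ s e s', δB s e = some s' → δA s e = some s')
    (hESSP : ∀ (e : E) (s : S), δB s e = none →
      ∃ (sup : S → Bool) (sig : E → Bool → Option Bool),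
        (∀ e', sig e' ∈ τ) ∧ IsRegion δB sup sig ∧ sig e (sup s) = none)
    (s s' : S) (e : E)
    (hK : δA s e = some s' ∧ δB s e = none)
    (hrev : δA s' e = some s) :
    δB s' e = none := by
  obtain ⟨hA, hB⟩ := hK
  by_contra h
  obtain ⟨t, ht⟩ := Option.ne_none_iff_exists'.mp h
  have hts : t = s := by
    have := hsub _ _ _ ht
    rw [hrev] at this; exact (Option.some_injective _ this).symm
  subst hts
  obtain ⟨sup, sig, hmem, hreg, hnone⟩ := hESSP e t hB
  have hedge := hreg _ _ _ ht
  have := hτ (hmem e)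
  simp only [Set.mem_insert_iff, Set.mem_singleton_iff] at this
  rcases this with h1 | h1 | h1 | h1 <;> rw [h1] at hedge hnone <;>
    simp [nopB, swapB, usedB, freeB] at hedge hnone <;>
    cases h2 : sup t <;> cases h3 : sup s' <;> simp_all
end
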